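/- Suppose the value function ν : P({1,…,d}) → ℝ satisfies ν(T) = ν(⌊T⌋) for every T ⊆ {1,…,d}. Then for every nonempty U ⊆ {1,…,d}, the Shapley interaction index satisfies φ_U = Σ_{W irreducible} ν(W) · 1[U ⊆ W ∪ ({1,…,d} ∖ ⌈W⌉)] · (−1)^{|U ∩ ({1,…,d} ∖ ⌈W⌉)|} · ω_{|W| − |⌈W⌉ ∩ U|, |{1,…,d} ∖ (⌈W⌉ ∪ U)|}, where the sum is over all irreducible subsets W ⊆ {1,…,d}. -/

import Mathlib

/-- Vertex type: `some i` is the feature vertex `i`, `none` is the target vertex `Y`. -/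
abbrev Vtx (d : ℕ) := Option (Fin d)

/-- `PathTo E j p` means `p` is a directed path in the graph with edge relation `E`
from the feature vertex `j` to the target vertex `Y` (encoded as `none`). -/
def PathTo {d : ℕ} (E : Vtx d → Vtx d → Prop) (j : Fin d) (p : List (Vtx d)) : Prop :=
  p.Chain' E ∧ p.head? = some (some j) ∧ p.getLast? = some none

open Classical in
/-- The basis `⌊S⌋` of `S`: all `j ∈ S` having a directed path to `Y`
whose only vertex in `S` is `j`. -/
noncomputable def bas {d : ℕ} (E : Vtx d → Vtx d → Prop) (S : Finset (Fin d)) :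
    Finset (Fin d) :=
  S.filter fun j => ∃ p : List (Vtx d), PathTo E j p ∧ ∀ i ∈ S, some i ∈ p → i = j

open Classical in
/-- The closure `⌈S⌉` of `S`: all `j ∈ {1,…,d}` such that every directed path
from `j` to `Y` contains a vertex of `S`. -/
noncomputable def clos {d : ℕ} (E : Vtx d → Vtx d → Prop) (S : Finset (Fin d)) :
    Finset (Fin d) :=
  Finset.univ.filter fun j => ∀ p : List (Vtx d), PathTo E j p → ∃ i ∈ S, some i ∈ p

/-- The interaction weight `p^u_s = 1/((d − u + 1) ⬝ C(d − u, s))`. -/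
noncomputable def pInt (d u s : ℕ) : ℝ :=
  1 / (((d - u + 1 : ℕ) : ℝ) * ((d - u).choose s : ℝ))

/-- The discrete derivative `Δ_U(S) = Σ_{L ⊆ U} (−1)^{|U|−|L|} ν(S ∪ L)`. -/
noncomputable def discDeriv {d : ℕ} (ν : Finset (Fin d) → ℝ) (U S : Finset (Fin d)) : ℝ :=
  ∑ L ∈ U.powerset, (-1 : ℝ) ^ (U.card - L.card) * ν (S ∪ L)

/-- The Shapley interaction index `φ_U = Σ_{S ⊆ [d] \ U} Δ_U(S) ⬝ p^{|U|}_{|S|}`. -/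
noncomputable def interIdx {d : ℕ} (ν : Finset (Fin d) → ℝ) (U : Finset (Fin d)) : ℝ :=
  ∑ S ∈ (Finset.univ \ U).powerset, discDeriv ν U S * pInt d U.card S.card

/-- `ω_{a,b} = 1/((a + b + 1) ⬝ C(a + b, a))`. -/
noncomputable def omegaW (a b : ℕ) : ℝ :=
  1 / (((a + b + 1 : ℕ) : ℝ) * ((a + b).choose a : ℝ))

section Graph
variable {d : ℕ} {E : Vtx d → Vtx d → Prop}

lemma mem_bas_iff {S : Finset (Fin d)} {j : Fin d} :
    j ∈ bas E S ↔ j ∈ S ∧ ∃ p : List (Vtx d), PathTo E j p ∧ ∀ i ∈ S, some i ∈ p → i = j := by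
  classical
  simp [bas]

lemma mem_clos_iff {S : Finset (Fin d)} {j : Fin d} :
    j ∈ clos E S ↔ ∀ p : List (Vtx d), PathTo E j p → ∃ i ∈ S, some i ∈ p := by
  classical
  simp [clos]

lemma bas_subset (S : Finset (Fin d)) : bas E S ⊆ S :=
  fun _ h => (mem_bas_iff.1 h).1

lemma chain_mem_transGen {x y : Vtx d} {l : List (Vtx d)} (h : List.Chain E x l)
    (hy : y ∈ l) : Relation.TransGen E x y := by
  induction l generalizing x with
  | nil => simp at hy
  | cons z l ih =>
    unfold List.Chain at h; rw [List.chain_cons] at h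
    rcases List.mem_cons.1 hy with rfl | hy
    · exact Relation.TransGen.single h.1
    · exact Relation.TransGen.head h.1 (ih h.2 hy)

lemma path_suffix {j i : Fin d} {p : List (Vtx d)} (hp : PathTo E j p)
    (hi : some i ∈ p) : ∃ b, (some i :: b) <:+ p ∧ PathTo E i (some i :: b) := by
  obtain ⟨a, b, rfl⟩ := List.append_of_mem hi
  refine ⟨b, ⟨a, rfl⟩, hp.1.suffix ⟨a, rfl⟩, rfl, ?_⟩
  have h2 := hp.2.2
  rw [List.getLast?_append, List.getLast?_cons] at h2
  rw [List.getLast?_cons]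
  simpa using h2

lemma mem_of_path {j : Fin d} {p : List (Vtx d)} (hp : PathTo E j p) : some j ∈ p := by
  cases p with
  | nil => simp [PathTo] at hp
  | cons x q =>
    have := hp.2.1
    simp only [List.head?_cons, Option.some_inj] at this
    simp [this]

lemma head_eq_of_path {j : Fin d} {x : Vtx d} {q : List (Vtx d)}
    (hp : PathTo E j (x :: q)) : x = some j := by
  have := hp.2.1
  simpa using this

lemma path_hits_bas_aux (T : Finset (Fin d)) :
    ∀ n (p : List (Vtx d)), p.length ≤ n → ∀ j ∈ T, PathTo E j p →
      ∃ i ∈ bas E T, some i ∈ p := by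
  intro n
  induction n with
  | zero =>
    intro p hl j hj hp
    have := mem_of_path hp
    cases p <;> simp_all
  | succ n ih =>
    intro p hl j hj hp
    by_cases hw : ∀ i ∈ T, some i ∈ p → i = j
    · exact ⟨j, mem_bas_iff.2 ⟨hj, p, hp, hw⟩, mem_of_path hp⟩
    · push_neg at hw
      obtain ⟨t, ht, htp, htj⟩ := hw
      obtain ⟨b, hsuf, hq⟩ := path_suffix hp htp
      obtain ⟨a, ha⟩ := id hsuf
      have hane : a ≠ [] := by
        rintro rfl
        simp only [List.nil_append] at ha
        rw [← ha] at hp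
        exact htj (Option.some_inj.1 (head_eq_of_path hp))
      have hlen : (some t :: b).length ≤ n := by
        have h1 : p.length = a.length + (some t :: b).length := by rw [← ha]; simp
        have hal : 1 ≤ a.length := List.length_pos_iff.2 hane
        omega
      obtain ⟨i, hib, hiq⟩ := ih _ hlen t ht hq
      exact ⟨i, hib, hsuf.subset hiq⟩

lemma subset_clos_bas (T : Finset (Fin d)) : T ⊆ clos E (bas E T) := by
  intro j hj
  exact mem_clos_iff.2 fun p hp => path_hits_bas_aux T p.length p le_rfl j hj hp

lemma bas_idem (T : Finset (Fin d)) : bas E (bas E T) = bas E T := by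
  apply Finset.Subset.antisymm (bas_subset _)
  intro j hj
  obtain ⟨hjT, p, hp, hw⟩ := mem_bas_iff.1 hj
  exact mem_bas_iff.2 ⟨hj, p, hp, fun i hi hip => hw i (bas_subset _ hi) hip⟩

lemma subset_clos_self (S : Finset (Fin d)) : S ⊆ clos E S := by
  intro j hj
  exact mem_clos_iff.2 fun p hp => ⟨j, hj, mem_of_path hp⟩

lemma bas_eq_iff (hacyc : ∀ v : Vtx d, ¬ Relation.TransGen E v v)
    {W T : Finset (Fin d)} (hW : bas E W = W) :
    bas E T = W ↔ W ⊆ T ∧ T ⊆ clos E W := by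
  constructor
  · rintro rfl
    exact ⟨bas_subset T, subset_clos_bas T⟩
  · rintro ⟨hWT, hTC⟩
    apply Finset.Subset.antisymm
    · intro j hj
      obtain ⟨hjT, p, hp, hw⟩ := mem_bas_iff.1 hj
      by_contra hjW
      obtain ⟨i, hiW, hip⟩ := mem_clos_iff.1 (hTC hjT) p hp
      exact hjW (hw i (hWT hiW) hip ▸ hiW)
    · intro j hj
      have hj' : j ∈ bas E W := hW.symm ▸ hj
      obtain ⟨hjW, p, hp, hw⟩ := mem_bas_iff.1 hj'
      refine mem_bas_iff.2 ⟨hWT hj, p, hp, ?_⟩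
      intro t ht htp
      by_contra htj
      obtain ⟨b, hsuf, hq⟩ := path_suffix hp htp
      obtain ⟨i, hiW, hiq⟩ := mem_clos_iff.1 (hTC ht) _ hq
      have hij : i = j := hw i hiW (hsuf.subset hiq)
      subst hij
      obtain ⟨a, ha⟩ := id hsuf
      have hane : a ≠ [] := by
        rintro rfl
        simp only [List.nil_append] at ha
        rw [← ha] at hp
        exact htj (Option.some_inj.1 (head_eq_of_path hp))
      obtain ⟨x, a', rfl⟩ := List.exists_cons_of_ne_nil hane
      rw [List.cons_append] at ha
      rw [← ha] at hp
      have hx : x = some i := head_eq_of_path hp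
      subst hx
      have hchain : List.Chain E (some i) (a' ++ some t :: b) := hp.1
      have hmem : some i ∈ a' ++ some t :: b := by
        rcases List.mem_cons.1 hiq with h | h
        · exact absurd (Option.some_inj.1 h).symm htj
        · exact List.mem_append.2 (Or.inr (List.mem_cons.2 (Or.inr h)))
      exact hacyc (some i) (chain_mem_transGen hchain hmem)

end Graph

section Comb

noncomputable def pF (m s : ℕ) : ℝ := 1 / (((m + 1 : ℕ) : ℝ) * ((m.choose s) : ℝ))

lemma pF_eq (m s : ℕ) (h : s ≤ m) :
    pF m s = (s.factorial : ℝ) * ((m - s).factorial) / ((m + 1).factorial) := by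
  have hc : (m.choose s : ℝ) * s.factorial * (m - s).factorial = m.factorial := by
    exact_mod_cast congrArg (Nat.cast (R := ℝ)) (Nat.choose_mul_factorial_mul_factorial h)
  have h1 : ((m + 1).factorial : ℝ) = (m + 1) * m.factorial := by
    exact_mod_cast congrArg (Nat.cast (R := ℝ)) (Nat.factorial_succ m)
  have hcpos : (0:ℝ) < (m.choose s : ℝ) := by
    exact_mod_cast Nat.choose_pos h
  have hfpos : (0:ℝ) < ((m+1).factorial : ℝ) := by exact_mod_cast Nat.factorial_pos _
  rw [pF]
  push_cast
  rw [div_eq_div_iff (by positivity) (by positivity)]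
  rw [h1, ← hc]
  ring

lemma pF_rec (m s : ℕ) (h : s ≤ m) :
    pF m s = pF (m + 1) s + pF (m + 1) (s + 1) := by
  rw [pF_eq m s h, pF_eq (m+1) s (by omega), pF_eq (m+1) (s+1) (by omega)]
  have e1 : m + 1 - s = (m - s) + 1 := by omega
  have e2 : m + 1 - (s + 1) = m - s := by omega
  rw [e1, e2]
  have hf2 : (0:ℝ) < ((m+1+1).factorial : ℝ) := by exact_mod_cast Nat.factorial_pos _
  have h2 : ((m + 1 + 1).factorial : ℝ) = (m + 2) * (m+1).factorial := by
    have := Nat.factorial_succ (m+1); push_cast [this]; ring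
  rw [div_add_div _ _ (ne_of_gt hf2) (ne_of_gt hf2), div_eq_div_iff (by positivity) (by positivity)]
  have h3 : (((m - s) + 1).factorial : ℝ) = ((m:ℝ)-(s:ℝ) + 1) * (m-s).factorial := by
    rw [Nat.factorial_succ]; push_cast [Nat.cast_sub h]; ring
  have h4 : ((s + 1).factorial : ℝ) = (s + 1) * s.factorial := by
    have := Nat.factorial_succ s; push_cast [this]; ring
  rw [h2, h3, h4]
  ring

lemma pF_sum (n w b : ℕ) :
    ∑ k ∈ Finset.range (n + 1), (n.choose k : ℝ) * pF (w + n + b) (w + k) = pF (w + b) w := by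
  induction n with
  | zero => simp
  | succ n ih =>
    have key : ∀ k ∈ Finset.range (n + 1),
        (n.choose k : ℝ) * pF (w + n + b) (w + k)
        = (n.choose k : ℝ) * pF (w + (n+1) + b) (w + k)
          + (n.choose k : ℝ) * pF (w + (n+1) + b) (w + k + 1) := by
      intro k hk
      have hkn : k ≤ n := by simpa [Nat.lt_succ_iff] using hk
      have : w + k ≤ w + n + b := by omega
      rw [show w + (n+1) + b = (w + n + b) + 1 by ring, pF_rec _ _ this]
      ring
    rw [← ih, Finset.sum_congr rfl key, Finset.sum_add_distrib]
    rw [Finset.sum_range_succ' (fun k => ((n+1).choose k : ℝ) * pF (w + (n+1) + b) (w + k)) (n+1)]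
    have hsplit : ∀ k ∈ Finset.range (n + 1),
        (((n+1).choose (k+1) : ℕ) : ℝ) * pF (w + (n+1) + b) (w + (k+1))
        = (n.choose k : ℝ) * pF (w + (n+1) + b) (w + k + 1)
          + (n.choose (k+1) : ℝ) * pF (w + (n+1) + b) (w + k + 1) := by
      intro k hk
      have : (n+1).choose (k+1) = n.choose k + n.choose (k+1) := Nat.choose_succ_succ n k
      rw [this]
      push_cast
      ring_nf
    rw [Finset.sum_congr rfl hsplit, Finset.sum_add_distrib]
    have hlast : ∑ k ∈ Finset.range (n+1), (n.choose (k+1) : ℝ) * pF (w + (n+1) + b) (w + k + 1)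
        = ∑ k ∈ Finset.range (n+1), (n.choose k : ℝ) * pF (w + (n+1) + b) (w + k)
          - (n.choose 0 : ℝ) * pF (w + (n+1) + b) (w + 0) := by
      rw [Finset.sum_range_succ' (fun k => (n.choose k : ℝ) * pF (w + (n+1) + b) (w + k)) n]
      rw [Finset.sum_range_succ]
      simp only [Nat.choose_succ_self, Nat.cast_zero, zero_mul, add_zero]
      rw [add_sub_cancel_right]
      exact Finset.sum_congr rfl fun x _ => rfl
    rw [hlast]
    simp only [Nat.choose_zero_right, Nat.cast_one, one_mul, Nat.add_zero]
    ring

lemma pInt_eq_pF (d u s : ℕ) : pInt d u s = pF (d - u) s := rfl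

lemma omegaW_eq_pF (a b : ℕ) : omegaW a b = pF (a + b) a := rfl

lemma sum_powerset_pInt {α : Type*} [DecidableEq α] (N : Finset α) (d u w : ℕ) :
    ∑ A ∈ N.powerset, pInt d u (w + A.card)
      = ∑ k ∈ Finset.range (N.card + 1), (N.card.choose k : ℝ) * pInt d u (w + k) := by
  rw [Finset.sum_powerset]
  refine Finset.sum_congr rfl fun k _ => ?_
  rw [Finset.sum_congr rfl (fun A hA => by
    rw [(Finset.mem_powersetCard.1 hA).2]), Finset.sum_const, Finset.card_powersetCard]
  simp [nsmul_eq_mul]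

end Comb

lemma stepA {d : ℕ} (ν : Finset (Fin d) → ℝ) (U : Finset (Fin d)) :
    interIdx ν U = ∑ T ∈ (Finset.univ : Finset (Fin d)).powerset,
      (-1 : ℝ) ^ (U.card - (T ∩ U).card) * pInt d U.card (T \ U).card * ν T := by
  classical
  rw [interIdx]
  simp only [discDeriv, Finset.sum_mul]
  rw [← Finset.sum_product']
  refine Finset.sum_nbij' (fun x => x.1 ∪ x.2) (fun T => (T \ U, T ∩ U)) ?_ ?_ ?_ ?_ ?_
  · intro a _
    simp
  · intro T _
    simp only [Finset.mem_product, Finset.mem_powerset]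
    exact ⟨fun x hx => by simp_all [Finset.mem_sdiff], Finset.inter_subset_right⟩
  · rintro ⟨S, L⟩ ha
    simp only [Finset.mem_product, Finset.mem_powerset] at ha
    obtain ⟨hS, hL⟩ := ha
    have h1 : (S ∪ L) ∩ U = L := by
      ext x
      simp only [Finset.mem_inter, Finset.mem_union]
      constructor
      · rintro ⟨h | h, hU⟩
        · exact absurd hU (by have := hS h; simp [Finset.mem_sdiff] at this; exact this)
        · exact h
      · intro h; exact ⟨Or.inr h, hL h⟩
    have h2 : (S ∪ L) \ U = S := by
      ext x
      simp only [Finset.mem_sdiff, Finset.mem_union]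
      constructor
      · rintro ⟨h | h, hU⟩
        · exact h
        · exact absurd (hL h) hU
      · intro h
        exact ⟨Or.inl h, by have := hS h; simp [Finset.mem_sdiff] at this; exact this⟩
    simp [h1, h2]
  · intro T _
    simp only
    exact Finset.sdiff_union_inter T U
  · rintro ⟨S, L⟩ ha
    simp only [Finset.mem_product, Finset.mem_powerset] at ha
    obtain ⟨hS, hL⟩ := ha
    have h1 : (S ∪ L) ∩ U = L := by
      ext x
      simp only [Finset.mem_inter, Finset.mem_union]
      constructor
      · rintro ⟨h | h, hU⟩
        · exact absurd hU (by have := hS h; simp [Finset.mem_sdiff] at this; exact this)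
        · exact h
      · intro h; exact ⟨Or.inr h, hL h⟩
    have h2 : (S ∪ L) \ U = S := by
      ext x
      simp only [Finset.mem_sdiff, Finset.mem_union]
      constructor
      · rintro ⟨h | h, hU⟩
        · exact h
        · exact absurd (hL h) hU
      · intro h
        exact ⟨Or.inl h, by have := hS h; simp [Finset.mem_sdiff] at this; exact this⟩
    rw [h1, h2]
    ring

lemma stepD {d : ℕ} {E : Vtx d → Vtx d → Prop}
    (hacyc : ∀ v : Vtx d, ¬ Relation.TransGen E v v)
    {W : Finset (Fin d)} (hW : bas E W = W) (U : Finset (Fin d)) :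
    ∑ T ∈ Finset.univ.powerset.filter (fun T : Finset (Fin d) => bas E T = W),
      (-1 : ℝ) ^ (U.card - (T ∩ U).card) * pInt d U.card (T \ U).card
    = (if U ⊆ W ∪ (Finset.univ \ clos E W) then (1 : ℝ) else 0) *
        (-1 : ℝ) ^ (U ∩ (Finset.univ \ clos E W)).card *
        omegaW (W.card - (clos E W ∩ U).card) (Finset.univ \ (clos E W ∪ U)).card := by
  classical
  set C := clos E W with hC
  have hWC : W ⊆ C := subset_clos_self W
  set M := (C \ W) ∩ U with hM
  set N := (C \ W) \ U with hN
  set u := U.card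
  set w₁ := (W ∩ U).card with hw₁
  set w := (W \ U).card with hwdef
  set b := (Finset.univ \ (C ∪ U)).card with hb
  -- generic card facts for A disjoint from W
  have hcard1 : ∀ A : Finset (Fin d), A ⊆ C \ W →
      ((W ∪ A) ∩ U).card = w₁ + (A ∩ U).card := by
    intro A hA
    have : (W ∪ A) ∩ U = (W ∩ U) ∪ (A ∩ U) := Finset.union_inter_distrib_right ..
    rw [this, Finset.card_union_of_disjoint]
    refine Finset.disjoint_left.2 fun x hx1 hx2 => ?_
    have := hA (Finset.mem_inter.1 hx2).1
    simp only [Finset.mem_sdiff] at this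
    exact this.2 (Finset.mem_inter.1 hx1).1
  have hcard2 : ∀ A : Finset (Fin d), A ⊆ C \ W →
      ((W ∪ A) \ U).card = w + (A \ U).card := by
    intro A hA
    have : (W ∪ A) \ U = (W \ U) ∪ (A \ U) := Finset.union_sdiff_distrib ..
    rw [this, Finset.card_union_of_disjoint]
    refine Finset.disjoint_left.2 fun x hx1 hx2 => ?_
    have := hA (Finset.mem_sdiff.1 hx2).1
    simp only [Finset.mem_sdiff] at this
    exact this.2 (Finset.mem_sdiff.1 hx1).1
  -- Step 1: bijection with the powerset of C \ W
  have e1 : ∑ T ∈ Finset.univ.powerset.filter (fun T : Finset (Fin d) => bas E T = W),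
      (-1 : ℝ) ^ (u - (T ∩ U).card) * pInt d u (T \ U).card
      = ∑ A ∈ (C \ W).powerset,
        (-1 : ℝ) ^ (u - (w₁ + (A ∩ U).card)) * pInt d u (w + (A \ U).card) := by
    refine Finset.sum_nbij' (fun T => T \ W) (fun A => W ∪ A) ?_ ?_ ?_ ?_ ?_
    · intro T hT
      rw [Finset.mem_filter] at hT
      obtain ⟨hWT, hTC⟩ := (bas_eq_iff hacyc hW).1 hT.2
      simp only [Finset.mem_powerset]
      intro x hx
      rw [Finset.mem_sdiff] at hx ⊢
      exact ⟨hTC hx.1, hx.2⟩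
    · intro A hA
      rw [Finset.mem_powerset] at hA
      rw [Finset.mem_filter]
      refine ⟨Finset.mem_powerset.2 (Finset.subset_univ _), (bas_eq_iff hacyc hW).2
        ⟨Finset.subset_union_left, Finset.union_subset hWC fun x hx => (Finset.mem_sdiff.1 (hA hx)).1⟩⟩
    · intro T hT
      rw [Finset.mem_filter] at hT
      obtain ⟨hWT, _⟩ := (bas_eq_iff hacyc hW).1 hT.2
      exact Finset.union_sdiff_of_subset hWT
    · intro A hA
      rw [Finset.mem_powerset] at hA
      ext x
      simp only [Finset.mem_sdiff, Finset.mem_union]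
      constructor
      · rintro ⟨h | h, hW'⟩
        · exact absurd h hW'
        · exact h
      · intro h
        exact ⟨Or.inr h, fun hw' => (Finset.mem_sdiff.1 (hA h)).2 hw'⟩
    · intro T hT
      rw [Finset.mem_filter] at hT
      obtain ⟨hWT, hTC⟩ := (bas_eq_iff hacyc hW).1 hT.2
      have hTW : T \ W ⊆ C \ W := fun x hx => by
        rw [Finset.mem_sdiff] at hx ⊢; exact ⟨hTC hx.1, hx.2⟩
      have hTu : T = W ∪ (T \ W) := (Finset.union_sdiff_of_subset hWT).symm
      rw [show (T ∩ U).card = w₁ + ((T \ W) ∩ U).card from by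
            conv_lhs => rw [hTu]
            exact hcard1 _ hTW,
          show (T \ U).card = w + ((T \ W) \ U).card from by
            conv_lhs => rw [hTu]
            exact hcard2 _ hTW]
  rw [e1]
  -- Step 2: split A into (A ∩ U, A \ U)
  have e2 : ∑ A ∈ (C \ W).powerset,
        (-1 : ℝ) ^ (u - (w₁ + (A ∩ U).card)) * pInt d u (w + (A \ U).card)
      = ∑ x ∈ M.powerset ×ˢ N.powerset,
        (-1 : ℝ) ^ (u - (w₁ + x.1.card)) * pInt d u (w + x.2.card) := by
    refine Finset.sum_nbij' (fun A => (A ∩ U, A \ U)) (fun x => x.1 ∪ x.2) ?_ ?_ ?_ ?_ ?_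
    · intro A hA
      rw [Finset.mem_powerset] at hA
      simp only [Finset.mem_product, Finset.mem_powerset]
      constructor
      · intro x hx
        rw [Finset.mem_inter] at hx
        exact Finset.mem_inter.2 ⟨hA hx.1, hx.2⟩
      · intro x hx
        rw [Finset.mem_sdiff] at hx
        exact Finset.mem_sdiff.2 ⟨hA hx.1, hx.2⟩
    · rintro ⟨B, A'⟩ hx
      simp only [Finset.mem_product, Finset.mem_powerset] at hx
      exact Finset.mem_powerset.2 (Finset.union_subset
        (hx.1.trans Finset.inter_subset_left) (hx.2.trans Finset.sdiff_subset))
    · intro A _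
      simp only
      ext x
      simp only [Finset.mem_union, Finset.mem_inter, Finset.mem_sdiff]
      tauto
    · rintro ⟨B, A'⟩ hx
      simp only [Finset.mem_product, Finset.mem_powerset] at hx
      obtain ⟨hBM, hAN⟩ := hx
      have hBU : B ⊆ U := hBM.trans Finset.inter_subset_right
      have hAU : ∀ x ∈ A', x ∉ U := fun x hx => (Finset.mem_sdiff.1 (hAN hx)).2
      have g1 : (B ∪ A') ∩ U = B := by
        ext x
        simp only [Finset.mem_inter, Finset.mem_union]
        constructor
        · rintro ⟨h | h, hU'⟩
          · exact h
          · exact absurd hU' (hAU x h)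
        · intro h; exact ⟨Or.inl h, hBU h⟩
      have g2 : (B ∪ A') \ U = A' := by
        ext x
        simp only [Finset.mem_sdiff, Finset.mem_union]
        constructor
        · rintro ⟨h | h, hU'⟩
          · exact absurd (hBU h) hU'
          · exact h
        · intro h; exact ⟨Or.inr h, hAU x h⟩
      simp [g1, g2]
    · intro A _
      rfl
  rw [e2, Finset.sum_product]
  -- Step 3: sign rewrite and factoring
  have hw₁u : w₁ ≤ u := Finset.card_le_card Finset.inter_subset_right
  have hsgn : ∀ B ∈ M.powerset, ((-1 : ℝ)) ^ (u - (w₁ + B.card))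
      = (-1 : ℝ) ^ (u - w₁) * (-1 : ℝ) ^ B.card := by
    intro B hB
    rw [Finset.mem_powerset] at hB
    have hdisj : Disjoint (W ∩ U) B := Finset.disjoint_left.2 fun x hx1 hx2 => by
      have := hB hx2
      rw [hM, Finset.mem_inter, Finset.mem_sdiff] at this
      exact this.1.2 (Finset.mem_inter.1 hx1).1
    have hle : w₁ + B.card ≤ u := by
      rw [← Finset.card_union_of_disjoint hdisj]
      exact Finset.card_le_card (Finset.union_subset Finset.inter_subset_right
        (hB.trans Finset.inter_subset_right))
    have he : u - w₁ = (u - (w₁ + B.card)) + B.card := by omega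
    have h1 : ((-1 : ℝ)) ^ (B.card + B.card) = 1 := by
      rw [← two_mul, pow_mul]; norm_num
    calc ((-1 : ℝ)) ^ (u - (w₁ + B.card))
        = (-1 : ℝ) ^ (u - (w₁ + B.card)) * ((-1 : ℝ) ^ (B.card + B.card)) := by rw [h1, mul_one]
      _ = ((-1 : ℝ) ^ ((u - (w₁ + B.card)) + B.card)) * (-1 : ℝ) ^ B.card := by
          rw [pow_add, pow_add]; ring
      _ = (-1 : ℝ) ^ (u - w₁) * (-1 : ℝ) ^ B.card := by rw [← he]
  rw [Finset.sum_congr rfl fun B hB => Finset.sum_congr rfl fun A' _ => by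
    rw [hsgn B hB]]
  have efact : ∑ B ∈ M.powerset, ∑ A' ∈ N.powerset,
      (-1 : ℝ) ^ (u - w₁) * (-1 : ℝ) ^ B.card * pInt d u (w + A'.card)
      = (∑ B ∈ M.powerset, (-1 : ℝ) ^ B.card) *
        ((-1 : ℝ) ^ (u - w₁) * ∑ A' ∈ N.powerset, pInt d u (w + A'.card)) := by
    rw [Finset.sum_mul]
    refine Finset.sum_congr rfl fun B _ => ?_
    rw [Finset.mul_sum, Finset.mul_sum]
    refine Finset.sum_congr rfl fun A' _ => by ring
  have hMsum : (∑ B ∈ M.powerset, ((-1:ℝ)) ^ B.card) = if M = ∅ then (1:ℝ) else 0 := by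
    have hz := Finset.sum_powerset_neg_one_pow_card (x := M)
    have h2 : ((if M = ∅ then (1:ℤ) else 0 : ℤ) : ℝ) = (if M = ∅ then (1:ℝ) else 0) := by
      split <;> simp
    rw [← h2, ← hz]
    push_cast
    rfl
  rw [efact, hMsum]
  by_cases hME : M = ∅
  · -- indicator is 1
    have hsub : U ⊆ W ∪ (Finset.univ \ C) := by
      intro x hx
      by_cases hxC : x ∈ C
      · by_cases hxW : x ∈ W
        · exact Finset.mem_union.2 (Or.inl hxW)
        · exfalso
          have : x ∈ M := by
            rw [hM]; exact Finset.mem_inter.2 ⟨Finset.mem_sdiff.2 ⟨hxC, hxW⟩, hx⟩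
          simp [hME] at this
      · exact Finset.mem_union.2 (Or.inr (Finset.mem_sdiff.2 ⟨Finset.mem_univ x, hxC⟩))
    have hCU : C ∩ U = W ∩ U := by
      ext x
      simp only [Finset.mem_inter]
      constructor
      · rintro ⟨hxC, hxU⟩
        by_cases hxW : x ∈ W
        · exact ⟨hxW, hxU⟩
        · exfalso
          have : x ∈ M := by
            rw [hM]; exact Finset.mem_inter.2 ⟨Finset.mem_sdiff.2 ⟨hxC, hxW⟩, hxU⟩
          simp [hME] at this
      · rintro ⟨hxW, hxU⟩
        exact ⟨hWC hxW, hxU⟩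
    have hsign : (U ∩ (Finset.univ \ C)).card = u - w₁ := by
      have h1 : U ∩ (Finset.univ \ C) = U \ C := by
        ext x; simp [Finset.mem_sdiff, Finset.mem_inter]
      have h2 : (U ∩ C).card + (U \ C).card = u := Finset.card_inter_add_card_sdiff U C
      have h3 : U ∩ C = W ∩ U := by rw [Finset.inter_comm]; exact hCU
      rw [h1]
      rw [h3] at h2
      omega
    have ha : W.card - (C ∩ U).card = w := by
      rw [hCU]
      have := Finset.card_inter_add_card_sdiff W U
      omega
    have hdu : d - u = w + N.card + b := by
      have hsplit : Finset.univ \ U = ((W \ U) ∪ N) ∪ (Finset.univ \ (C ∪ U)) := by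
        ext x
        simp only [Finset.mem_sdiff, Finset.mem_union, Finset.mem_univ, true_and, hN]
        constructor
        · intro hxU
          by_cases hxC : x ∈ C
          · by_cases hxW : x ∈ W
            · exact Or.inl (Or.inl ⟨hxW, hxU⟩)
            · exact Or.inl (Or.inr ⟨⟨hxC, hxW⟩, hxU⟩)
          · exact Or.inr (fun h => h.elim hxC hxU)
        · rintro ((⟨h, hU'⟩ | ⟨⟨h, _⟩, hU'⟩) | h)
          · exact hU'
          · exact hU'
          · exact fun hxU => h (Or.inr hxU)
      have hd1 : Disjoint (W \ U) N := Finset.disjoint_left.2 fun x hx1 hx2 => by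
        rw [hN, Finset.mem_sdiff, Finset.mem_sdiff] at hx2
        exact hx2.1.2 (Finset.mem_sdiff.1 hx1).1
      have hd2 : Disjoint ((W \ U) ∪ N) (Finset.univ \ (C ∪ U)) :=
        Finset.disjoint_left.2 fun x hx1 hx2 => by
          rw [Finset.mem_sdiff] at hx2
          rcases Finset.mem_union.1 hx1 with h | h
          · exact hx2.2 (Finset.mem_union.2 (Or.inl (hWC (Finset.mem_sdiff.1 h).1)))
          · rw [hN, Finset.mem_sdiff, Finset.mem_sdiff] at h
            exact hx2.2 (Finset.mem_union.2 (Or.inl h.1.1))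
      have hcards : (Finset.univ \ U).card = w + N.card + b := by
        rw [hsplit, Finset.card_union_of_disjoint hd2, Finset.card_union_of_disjoint hd1]
      have hcu : (Finset.univ \ U).card = d - u := by
        rw [Finset.card_univ_diff]
        simp [Fintype.card_fin, u]
      omega
    have hAsum : ∑ A' ∈ N.powerset, pInt d u (w + A'.card) = omegaW w b := by
      rw [sum_powerset_pInt]
      have : ∀ k ∈ Finset.range (N.card + 1),
          (N.card.choose k : ℝ) * pInt d u (w + k)
          = (N.card.choose k : ℝ) * pF (w + N.card + b) (w + k) := by
        intro k _
        rw [pInt_eq_pF, hdu]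
      rw [Finset.sum_congr rfl this, pF_sum N.card w b, omegaW_eq_pF]
    rw [if_pos hME, if_pos hsub, hsign, ha, hAsum]
    ring
  · -- indicator is 0
    have hnsub : ¬ (U ⊆ W ∪ (Finset.univ \ C)) := by
      intro hsub
      obtain ⟨m, hm⟩ := Finset.nonempty_iff_ne_empty.2 hME
      rw [hM, Finset.mem_inter, Finset.mem_sdiff] at hm
      rcases Finset.mem_union.1 (hsub hm.2) with h | h
      · exact hm.1.2 h
      · exact (Finset.mem_sdiff.1 h).2 hm.1.1
    rw [if_neg hME, if_neg hnsub]
    ring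

/-- The do-Shapley interaction index as a sum over irreducible sets. -/
theorem stmt16 (d : ℕ) (E : Vtx d → Vtx d → Prop)
    (hacyc : ∀ v : Vtx d, ¬ Relation.TransGen E v v)
    (hY : ∀ v : Vtx d, ¬ E none v)
    (ν : Finset (Fin d) → ℝ) (hν : ∀ T : Finset (Fin d), ν T = ν (bas E T))
    (U : Finset (Fin d)) (hU : U.Nonempty) :
    interIdx ν U =
      ∑ W ∈ Finset.univ.powerset.filter (fun W : Finset (Fin d) => bas E W = W),
        ν W * (if U ⊆ W ∪ (Finset.univ \ clos E W) then (1 : ℝ) else 0) *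
          (-1 : ℝ) ^ (U ∩ (Finset.univ \ clos E W)).card *
          omegaW (W.card - (clos E W ∩ U).card)
            (Finset.univ \ (clos E W ∪ U)).card := by
    classical
  rw [stepA ν U]
  rw [Finset.sum_congr rfl (fun T _ => by rw [hν T] :
    ∀ T ∈ (Finset.univ : Finset (Fin d)).powerset,
      (-1 : ℝ) ^ (U.card - (T ∩ U).card) * pInt d U.card (T \ U).card * ν T
      = (-1 : ℝ) ^ (U.card - (T ∩ U).card) * pInt d U.card (T \ U).card * ν (bas E T))]
  have hmaps : ∀ T ∈ (Finset.univ : Finset (Fin d)).powerset,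
      bas E T ∈ Finset.univ.powerset.filter (fun W : Finset (Fin d) => bas E W = W) :=
    fun T _ => Finset.mem_filter.2 ⟨Finset.mem_powerset.2 (Finset.subset_univ _), bas_idem T⟩
  rw [← Finset.sum_fiberwise_of_maps_to hmaps
    (fun T => (-1 : ℝ) ^ (U.card - (T ∩ U).card) * pInt d U.card (T \ U).card * ν (bas E T))]
  refine Finset.sum_congr rfl fun W hW' => ?_
  have hWirr : bas E W = W := (Finset.mem_filter.1 hW').2
  have step1 : ∑ T ∈ Finset.univ.powerset.filter (fun T : Finset (Fin d) => bas E T = W),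
      (-1 : ℝ) ^ (U.card - (T ∩ U).card) * pInt d U.card (T \ U).card * ν (bas E T)
      = (∑ T ∈ Finset.univ.powerset.filter (fun T : Finset (Fin d) => bas E T = W),
          (-1 : ℝ) ^ (U.card - (T ∩ U).card) * pInt d U.card (T \ U).card) * ν W := by
    rw [Finset.sum_mul]
    refine Finset.sum_congr rfl fun T hT => by
      rw [(Finset.mem_filter.1 hT).2]
  rw [step1, stepD hacyc hWirr U]
  ring
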